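/- arXiv:2301.13349 — 2 statements merged into one kernel-verified Lean document; each statement's English description precedes it below -/
import Mathlib

section
/- For any sequence u_1,...,u_T in R^d with average ū, the second order variability Ē = ∑_{t=1}^T ‖u_t − ū‖₂² satisfies Ē ≤ P·S̄, where P is the path length and S̄ the first order variability. -/
/-!
Any two points of the sequence are joined by a stretch of the path, so their distance is at most
the path length `P`. The mean lies in the convex hull of the points, hence in every closed ball of
radius `P` centred at one of them: each deviation `‖u t - ū‖` is at most `P`, and therefore
`‖u t - ū‖² ≤ P ‖u t - ū‖`; summing over `t` gives the claim.
-/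

open Finset

lemma norm_sub_le_sum_range_norm_sub {E : Type*} [SeminormedAddCommGroup E] (u : ℕ → E)
    {a b N : ℕ} (ha : a ≤ N) (hb : b ≤ N) :
    ‖u b - u a‖ ≤ ∑ t ∈ range N, ‖u (t + 1) - u t‖ := by
  wlog hab : a ≤ b generalizing a b
  · rw [norm_sub_rev]
    exact this hb ha (le_of_not_ge hab)
  calc ‖u b - u a‖ = dist (u a) (u b) := (dist_eq_norm_sub' ..).symm
    _ ≤ ∑ t ∈ Ico a b, dist (u t) (u (t + 1)) := dist_le_Ico_sum_dist u hab
    _ ≤ ∑ t ∈ range N, dist (u t) (u (t + 1)) :=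
        sum_le_sum_of_subset_of_nonneg (fun t ht => by simp only [mem_Ico, mem_range] at ht ⊢; omega)
          fun _ _ _ => dist_nonneg
    _ = ∑ t ∈ range N, ‖u (t + 1) - u t‖ := sum_congr rfl fun _ _ => dist_eq_norm_sub' ..

lemma norm_sub_average_le {E ι : Type*} [SeminormedAddCommGroup E] [NormedSpace ℝ E]
    {s : Finset ι} (hs : s.Nonempty) (u : ι → E) (x : E) {C : ℝ}
    (h : ∀ i ∈ s, ‖x - u i‖ ≤ C) :
    ‖x - (#s : ℝ)⁻¹ • ∑ i ∈ s, u i‖ ≤ C := by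
  have hmean : ∑ i ∈ s, (#s : ℝ)⁻¹ • u i ∈ Metric.closedBall x C :=
    (convex_closedBall x C).sum_mem (fun _ _ => by positivity)
      (by simp [hs.card_ne_zero])
      fun i hi => by rw [mem_closedBall_iff_norm']; exact h i hi
  rwa [← smul_sum, mem_closedBall_iff_norm'] at hmean

theorem stmt_6_general (d T : ℕ) (u : ℕ → EuclideanSpace ℝ (Fin d)) :
    ∑ t ∈ Finset.range T, ‖u t - (T : ℝ)⁻¹ • ∑ s ∈ Finset.range T, u s‖ ^ 2 ≤
      (∑ t ∈ Finset.range (T - 1), ‖u (t + 1) - u t‖) *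
        ∑ t ∈ Finset.range T, ‖u t - (T : ℝ)⁻¹ • ∑ s ∈ Finset.range T, u s‖ := by
  have hdev : ∀ t ∈ range T, ‖u t - (T : ℝ)⁻¹ • ∑ s ∈ range T, u s‖ ≤
      ∑ t ∈ range (T - 1), ‖u (t + 1) - u t‖ := fun t ht => by
    simpa only [card_range] using norm_sub_average_le ⟨t, ht⟩ u (u t) fun s hs =>
      norm_sub_le_sum_range_norm_sub u (by have := mem_range.mp hs; omega)
        (by have := mem_range.mp ht; omega)
  rw [mul_sum]
  refine sum_le_sum fun t ht => ?_
  rw [sq]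
  exact mul_le_mul_of_nonneg_right (hdev t ht) (norm_nonneg _)

theorem stmt_6 (d T : ℕ) (hT : 1 ≤ T) (u : ℕ → EuclideanSpace ℝ (Fin d)) :
    ∑ t ∈ Finset.range T, ‖u t - (T : ℝ)⁻¹ • ∑ s ∈ Finset.range T, u s‖ ^ 2 ≤
      (∑ t ∈ Finset.range (T - 1), ‖u (t + 1) - u t‖) *
        ∑ t ∈ Finset.range T, ‖u t - (T : ℝ)⁻¹ • ∑ s ∈ Finset.range T, u s‖ :=
  stmt_6_general d T u
end

section
/- Local averaging does not increase path length: if w is obtained from u_1,...,u_T by replacing k consecutive entries u_{τ+1},...,u_{τ+k} by their average, then ∑_{t=1}^{T−1}‖w_{t+1}−w_t‖₂ ≤ ∑_{t=1}^{T−1}‖u_{t+1}−u_t‖₂. -/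
open Finset

lemma tele_bound {E : Type*} [SeminormedAddCommGroup E] (v : ℕ → E) {a b : ℕ} (h : a ≤ b) :
    ‖v b - v a‖ ≤ ∑ t ∈ Finset.Ico a b, ‖v (t+1) - v t‖ := by
  calc ‖v b - v a‖ = dist (v a) (v b) := by rw [dist_eq_norm, norm_sub_rev]
    _ ≤ ∑ i ∈ Finset.Ico a b, dist (v i) (v (i+1)) := dist_le_Ico_sum_dist v h
    _ = ∑ t ∈ Finset.Ico a b, ‖v (t+1) - v t‖ :=
        Finset.sum_congr rfl fun i _ => by rw [dist_eq_norm, norm_sub_rev]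

lemma avg_bound {E : Type*} [NormedAddCommGroup E] [NormedSpace ℝ E] (k : ℕ) (hk : k ≠ 0)
    (v : ℕ → E) (c : E) :
    ‖(k : ℝ)⁻¹ • (∑ i ∈ Finset.range k, v i) - c‖ ≤
      (k : ℝ)⁻¹ * ∑ i ∈ Finset.range k, ‖v i - c‖ := by
  have hk' : (k : ℝ) ≠ 0 := Nat.cast_ne_zero.mpr hk
  have h1 : (k : ℝ)⁻¹ • (∑ i ∈ Finset.range k, v i) - c
      = (k : ℝ)⁻¹ • ∑ i ∈ Finset.range k, (v i - c) := by
    rw [Finset.sum_sub_distrib, smul_sub, Finset.sum_const, Finset.card_range,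
      ← Nat.cast_smul_eq_nsmul ℝ, smul_smul, inv_mul_cancel₀ hk', one_smul]
  rw [h1, norm_smul, Real.norm_eq_abs, abs_of_nonneg (by positivity)]
  exact mul_le_mul_of_nonneg_left (norm_sum_le _ _) (by positivity)

theorem stmt_7 (d T k τ : ℕ) (hk : 1 ≤ k) (hkT : k ≤ T) (hτ : τ + k ≤ T)
    (u w : ℕ → EuclideanSpace ℝ (Fin d))
    (hout : ∀ t, t < τ ∨ τ + k ≤ t → w t = u t)
    (hin : ∀ t, τ ≤ t → t < τ + k → w t = (k : ℝ)⁻¹ • ∑ i ∈ Finset.range k, u (τ + i)) :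
    ∑ t ∈ Finset.range (T - 1), ‖w (t + 1) - w t‖ ≤
      ∑ t ∈ Finset.range (T - 1), ‖u (t + 1) - u t‖ := by
  have hk0 : k ≠ 0 := by omega
  have hkR : (k : ℝ) ≠ 0 := Nat.cast_ne_zero.mpr hk0
  set A : EuclideanSpace ℝ (Fin d) := (k : ℝ)⁻¹ • ∑ i ∈ Finset.range k, u (τ + i) with hA
  -- interior differences vanish
  have hzero : ∀ t, τ ≤ t → t + 1 < τ + k → ‖w (t+1) - w t‖ = 0 := fun t h1 h2 => by
    rw [hin t h1 (by omega), hin (t+1) (by omega) h2, sub_self, norm_zero]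
  -- split both sums along the predicate P
  have hsplit : ∀ (v : ℕ → EuclideanSpace ℝ (Fin d)),
      ∑ t ∈ Finset.range (T-1), ‖v (t+1) - v t‖ =
        (∑ t ∈ (Finset.range (T-1)).filter (fun t => τ ≤ t+1 ∧ t < τ+k), ‖v (t+1) - v t‖)
        + ∑ t ∈ (Finset.range (T-1)).filter (fun t => ¬(τ ≤ t+1 ∧ t < τ+k)), ‖v (t+1) - v t‖ :=
    fun v => (Finset.sum_filter_add_sum_filter_not _ _ _).symm
  rw [hsplit w, hsplit u]
  have heq : ∑ t ∈ (Finset.range (T-1)).filter (fun t => ¬(τ ≤ t+1 ∧ t < τ+k)), ‖w (t+1) - w t‖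
      = ∑ t ∈ (Finset.range (T-1)).filter (fun t => ¬(τ ≤ t+1 ∧ t < τ+k)), ‖u (t+1) - u t‖ := by
    refine Finset.sum_congr rfl fun t ht => ?_
    simp only [Finset.mem_filter, Finset.mem_range] at ht
    rw [hout t (by omega), hout (t+1) (by omega)]
  rw [heq]
  refine add_le_add ?_ le_rfl
  have hB : (Finset.range (T-1)).filter (fun t => τ ≤ t+1 ∧ t < τ+k)
      = Finset.Ico (τ-1) (min (τ+k) (T-1)) := by
    ext t; simp only [Finset.mem_filter, Finset.mem_range, Finset.mem_Ico]; omega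
  rw [hB]
  -- boundary bounds
  have hLbound : 1 ≤ τ → ‖w τ - w (τ-1)‖ ≤ (k:ℝ)⁻¹ * ∑ i ∈ Finset.range k, ‖u (τ+i) - u (τ-1)‖ := by
    intro h1
    rw [hin τ le_rfl (by omega), hout (τ-1) (Or.inl (by omega))]
    exact avg_bound k hk0 _ _
  have hRbound : ‖w (τ+k) - w (τ+k-1)‖ ≤ (k:ℝ)⁻¹ * ∑ i ∈ Finset.range k, ‖u (τ+k) - u (τ+i)‖ := by
    rw [hout (τ+k) (Or.inr le_rfl), hin (τ+k-1) (by omega) (by omega), norm_sub_rev]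
    calc ‖A - u (τ+k)‖ ≤ (k:ℝ)⁻¹ * ∑ i ∈ Finset.range k, ‖u (τ+i) - u (τ+k)‖ :=
          avg_bound k hk0 _ _
      _ = (k:ℝ)⁻¹ * ∑ i ∈ Finset.range k, ‖u (τ+k) - u (τ+i)‖ := by
          congr 1; exact Finset.sum_congr rfl fun i _ => norm_sub_rev _ _
  set g : ℕ → ℝ := fun t => ‖u (t+1) - u t‖ with hg
  have hgnn : ∀ t, 0 ≤ g t := fun t => norm_nonneg _
  rcases Nat.lt_or_ge (τ + k) T with hlt | hge
  · -- right end strictly inside : min = τ+k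
    rw [min_eq_left (by omega)]
    rcases Nat.eq_zero_or_pos τ with rfl | hτ1
    · -- τ = 0, only right boundary
      simp only [Nat.zero_sub, zero_add] at *
      have hsum : ∑ t ∈ Finset.Ico 0 k, ‖w (t+1) - w t‖ = ‖w (k-1+1) - w (k-1)‖ := by
        refine Finset.sum_eq_single_of_mem _ (by simp; omega) fun t ht hne => ?_
        simp only [Finset.mem_Ico] at ht
        exact hzero t (by omega) (by omega)
      rw [hsum]
      have hidx : k - 1 + 1 = k := by omega
      rw [hidx]
      calc ‖w k - w (k-1)‖ ≤ (k:ℝ)⁻¹ * ∑ i ∈ Finset.range k, ‖u k - u i‖ := by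
            simpa using hRbound
        _ ≤ (k:ℝ)⁻¹ * ∑ i ∈ Finset.range k, ∑ t ∈ Finset.Ico 0 k, g t := by
            refine mul_le_mul_of_nonneg_left (Finset.sum_le_sum fun i hi => ?_) (by positivity)
            simp only [Finset.mem_range] at hi
            calc ‖u k - u i‖ ≤ ∑ t ∈ Finset.Ico i k, g t := tele_bound u (by omega)
              _ ≤ ∑ t ∈ Finset.Ico 0 k, g t :=
                  Finset.sum_le_sum_of_subset_of_nonneg
                    (Finset.Ico_subset_Ico (by omega) le_rfl) (fun t _ _ => hgnn t)
        _ = ∑ t ∈ Finset.Ico 0 k, g t := by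
            rw [Finset.sum_const, Finset.card_range, nsmul_eq_mul, ← mul_assoc,
              inv_mul_cancel₀ hkR, one_mul]
    · -- τ ≥ 1, both boundaries
      have hτ1' : τ - 1 + 1 = τ := by omega
      rw [Finset.sum_eq_sum_Ico_succ_bot (show τ - 1 < τ + k by omega)
        (fun t => ‖w (t+1) - w t‖), hτ1']
      have hsum : ∑ t ∈ Finset.Ico τ (τ+k), ‖w (t+1) - w t‖ = ‖w (τ+k-1+1) - w (τ+k-1)‖ := by
        refine Finset.sum_eq_single_of_mem _ (by simp [Finset.mem_Ico]; omega) fun t ht hne => ?_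
        simp only [Finset.mem_Ico] at ht
        exact hzero t (by omega) (by omega)
      have hidx : τ + k - 1 + 1 = τ + k := by omega
      rw [hsum, hidx]
      calc ‖w τ - w (τ-1)‖ + ‖w (τ+k) - w (τ+k-1)‖
          ≤ (k:ℝ)⁻¹ * ∑ i ∈ Finset.range k, ‖u (τ+i) - u (τ-1)‖
            + (k:ℝ)⁻¹ * ∑ i ∈ Finset.range k, ‖u (τ+k) - u (τ+i)‖ :=
            add_le_add (hLbound hτ1) hRbound
        _ = (k:ℝ)⁻¹ * ∑ i ∈ Finset.range k, (‖u (τ+i) - u (τ-1)‖ + ‖u (τ+k) - u (τ+i)‖) := by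
            rw [Finset.sum_add_distrib, mul_add]
        _ ≤ (k:ℝ)⁻¹ * ∑ i ∈ Finset.range k, ∑ t ∈ Finset.Ico (τ-1) (τ+k), g t := by
            refine mul_le_mul_of_nonneg_left (Finset.sum_le_sum fun i hi => ?_) (by positivity)
            simp only [Finset.mem_range] at hi
            calc ‖u (τ+i) - u (τ-1)‖ + ‖u (τ+k) - u (τ+i)‖
                ≤ (∑ t ∈ Finset.Ico (τ-1) (τ+i), g t) + ∑ t ∈ Finset.Ico (τ+i) (τ+k), g t :=
                  add_le_add (tele_bound u (by omega)) (tele_bound u (by omega))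
              _ = ∑ t ∈ Finset.Ico (τ-1) (τ+k), g t :=
                  Finset.sum_Ico_consecutive _ (by omega) (by omega)
        _ = ∑ t ∈ Finset.Ico (τ-1) (τ+k), g t := by
            rw [Finset.sum_const, Finset.card_range, nsmul_eq_mul, ← mul_assoc,
              inv_mul_cancel₀ hkR, one_mul]
  · -- τ + k = T : min = T-1, no right boundary
    have hTk : τ + k = T := by omega
    rw [min_eq_right (by omega)]
    rcases Nat.eq_zero_or_pos τ with rfl | hτ1
    · -- everything interior: sum is zero
      have : ∑ t ∈ Finset.Ico (0-1) (T-1), ‖w (t+1) - w t‖ = 0 := by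
        refine Finset.sum_eq_zero fun t ht => ?_
        simp only [Finset.mem_Ico] at ht
        exact hzero t (by omega) (by omega)
      rw [this]
      exact Finset.sum_nonneg fun t _ => hgnn t
    · -- τ ≥ 1, left boundary only
      have hsum : ∑ t ∈ Finset.Ico (τ-1) (T-1), ‖w (t+1) - w t‖ = ‖w (τ-1+1) - w (τ-1)‖ := by
        refine Finset.sum_eq_single_of_mem _ (by simp [Finset.mem_Ico]; omega) fun t ht hne => ?_
        simp only [Finset.mem_Ico] at ht
        exact hzero t (by omega) (by omega)
      have hτ1' : τ - 1 + 1 = τ := by omega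
      rw [hsum, hτ1']
      calc ‖w τ - w (τ-1)‖ ≤ (k:ℝ)⁻¹ * ∑ i ∈ Finset.range k, ‖u (τ+i) - u (τ-1)‖ := hLbound hτ1
        _ ≤ (k:ℝ)⁻¹ * ∑ i ∈ Finset.range k, ∑ t ∈ Finset.Ico (τ-1) (T-1), g t := by
            refine mul_le_mul_of_nonneg_left (Finset.sum_le_sum fun i hi => ?_) (by positivity)
            simp only [Finset.mem_range] at hi
            calc ‖u (τ+i) - u (τ-1)‖ ≤ ∑ t ∈ Finset.Ico (τ-1) (τ+i), g t := tele_bound u (by omega)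
              _ ≤ ∑ t ∈ Finset.Ico (τ-1) (T-1), g t :=
                  Finset.sum_le_sum_of_subset_of_nonneg
                    (Finset.Ico_subset_Ico le_rfl (by omega)) (fun t _ _ => hgnn t)
        _ = ∑ t ∈ Finset.Ico (τ-1) (T-1), g t := by
            rw [Finset.sum_const, Finset.card_range, nsmul_eq_mul, ← mul_assoc,
              inv_mul_cancel₀ hkR, one_mul]
end
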